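/- arXiv:1007.1001 — 2 statements merged into one kernel-verified Lean document; each statement's English description precedes it below -/
import Mathlib

section
/- Let g(x) = (1/(2α))·exp(-|x|/α) with α > 0, and let f : ℝ → ℝ be bounded and twice continuously differentiable with bounded first and second derivatives. Then the convolution F = g * f satisfies the Helmholtz relation f = F - α²·F'' pointwise. -/
open MeasureTheory Real

/-- Integrability of `exp (y/α)` on left half-lines. -/
private lemma helm_exp_int_Iic {α : ℝ} (hα : 0 < α) (t : ℝ) :
    IntegrableOn (fun y => Real.exp (y / α)) (Set.Iic t) := by
  have hkey : IntegrableOn (fun y => Real.exp (-y / α)) (Set.Ici (-t)) := by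
    rw [integrableOn_Ici_iff_integrableOn_Ioi]
    have := exp_neg_integrableOn_Ioi (-t) (inv_pos.mpr hα)
    simpa [neg_div, div_eq_mul_inv, mul_comm] using this
  have hs : Set.Iic t = (fun y : ℝ => -y) ⁻¹' Set.Ici (-t) := by
    ext y; simp
  have hfun : (fun y : ℝ => Real.exp (y / α)) =
      (fun y => Real.exp (-y / α)) ∘ (fun y : ℝ => -y) := by
    funext y; simp [Function.comp, neg_neg]
  rw [hfun, hs]
  rw [(Measure.measurePreserving_neg (volume : Measure ℝ)).integrableOn_comp_preimage
      (Homeomorph.neg ℝ).measurableEmbedding]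
  exact hkey

/-- The key derivative computation for the left half of the Helmholtz convolution. -/
private lemma helm_hasDerivAt_left {α : ℝ} (hα : 0 < α) (f : ℝ → ℝ) (hfc : Continuous f)
    (M : ℝ) (hM : ∀ y, |f y| ≤ M) (x : ℝ) :
    HasDerivAt (fun t => Real.exp (-t / α) * ∫ y in Set.Iic t, Real.exp (y / α) * f y)
      (-α⁻¹ * (Real.exp (-x / α) * ∫ y in Set.Iic x, Real.exp (y / α) * f y) + f x) x := by
  set k : ℝ → ℝ := fun y => Real.exp (y / α) * f y with hk_def
  have hkc : Continuous k := (Real.continuous_exp.comp (continuous_id.div_const α)).mul hfc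
  have hk : ∀ t : ℝ, IntegrableOn k (Set.Iic t) := by
    intro t
    refine Integrable.mono' ((helm_exp_int_Iic hα t).mul_const M)
      (hkc.aestronglyMeasurable.restrict) ?_
    filter_upwards with y
    have : ‖k y‖ = Real.exp (y / α) * |f y| := by
      rw [Real.norm_eq_abs, abs_mul, abs_of_pos (Real.exp_pos _)]
    rw [this]
    exact mul_le_mul_of_nonneg_left (hM y) (Real.exp_pos _).le
  set C : ℝ := ∫ y in Set.Iic (0 : ℝ), k y with hC
  set G : ℝ → ℝ := fun t => ∫ y in (0 : ℝ)..t, k y with hG_def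
  have hrepr : ∀ t : ℝ, (∫ y in Set.Iic t, k y) = C + G t := by
    intro t
    have := intervalIntegral.integral_Iic_sub_Iic (μ := volume) (f := k) (hk 0) (hk t)
    simp only [hG_def, hC]
    linarith
  have hfun : (fun t => Real.exp (-t / α) * ∫ y in Set.Iic t, k y)
      = fun t => Real.exp (-t / α) * (C + G t) := by
    funext t; rw [hrepr t]
  have hG : HasDerivAt G (k x) x := by
    refine intervalIntegral.integral_hasDerivAt_right (hkc.intervalIntegrable _ _)
      (hkc.stronglyMeasurableAtFilter _ _) hkc.continuousAt
  have hE : HasDerivAt (fun t : ℝ => Real.exp (-t / α)) (Real.exp (-x / α) * -α⁻¹) x := by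
    have h1 : HasDerivAt (fun t : ℝ => -t / α) (-α⁻¹) x := by
      simpa [neg_div, one_div] using ((hasDerivAt_id x).neg.div_const α)
    exact (Real.hasDerivAt_exp (-x / α)).comp x h1
  have hP : HasDerivAt (fun t => Real.exp (-t / α) * (C + G t))
      ((Real.exp (-x / α) * -α⁻¹) * (C + G x) + Real.exp (-x / α) * k x) x :=
    hE.mul (hG.const_add C)
  rw [hfun]
  convert hP using 1
  have hcancel : Real.exp (-x / α) * k x = f x := by
    rw [hk_def]
    rw [← mul_assoc, ← Real.exp_add, neg_div, neg_add_cancel, Real.exp_zero, one_mul]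
  rw [hrepr x, hcancel]
  ring

/-- The Helmholtz kernel is the Green's function of `1 - α² d²/dx²`:
for bounded C² `f` with bounded derivatives, `f = F - α² F''` where `F = g * f`. -/
theorem helmholtz_filter_relation (α : ℝ) (hα : 0 < α) (f : ℝ → ℝ)
    (hf : ContDiff ℝ 2 f)
    (hbdd : ∃ M : ℝ, ∀ x : ℝ, |f x| ≤ M ∧ |deriv f x| ≤ M ∧ |deriv (deriv f) x| ≤ M)
    (F : ℝ → ℝ)
    (hF : ∀ x : ℝ, F x = ∫ y : ℝ, (1 / (2 * α)) * Real.exp (-|x - y| / α) * f y) :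
    ∀ x : ℝ, f x = F x - α ^ 2 * deriv (deriv F) x := by
  obtain ⟨M, hMall⟩ := hbdd
  have hM : ∀ y, |f y| ≤ M := fun y => (hMall y).1
  have hfc : Continuous f := hf.continuous
  -- the two half-line pieces
  set A : ℝ → ℝ := fun t => Real.exp (-t / α) * ∫ y in Set.Iic t, Real.exp (y / α) * f y
    with hA_def
  set Atil : ℝ → ℝ := fun t => Real.exp (-t / α) * ∫ y in Set.Iic t, Real.exp (y / α) * f (-y)
    with hAtil_def
  set B : ℝ → ℝ := fun u => Atil (-u) with hB_def
  have hfc' : Continuous (fun y => f (-y)) := hfc.comp continuous_neg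
  have hM' : ∀ y, |f (-y)| ≤ M := fun y => hM (-y)
  have hA : ∀ u, HasDerivAt A (-α⁻¹ * A u + f u) u := fun u =>
    helm_hasDerivAt_left hα f hfc M hM u
  have hAt : ∀ u, HasDerivAt Atil (-α⁻¹ * Atil u + f (-u)) u := fun u =>
    helm_hasDerivAt_left hα (fun y => f (-y)) hfc' M hM' u
  have hB : ∀ u, HasDerivAt B (α⁻¹ * B u - f u) u := by
    intro u
    have h1 : HasDerivAt B ((-α⁻¹ * Atil (-u) + f (-(-u))) * (-1)) u :=
      (hAt (-u)).comp u (hasDerivAt_neg u)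
    convert h1 using 1
    simp only [hB_def, neg_neg]
    ring
  -- identify `B` with the right half-line integral
  have hBval : ∀ u : ℝ, B u = Real.exp (u / α) * ∫ y in Set.Ioi u,
      Real.exp (-y / α) * f y := by
    intro u
    have h := integral_comp_neg_Iic (-u) (fun y => Real.exp (-y / α) * f y)
    simp only [neg_neg] at h
    simp only [hB_def, hAtil_def, neg_neg]
    rw [h]
  -- integrability of the pieces
  have hkIic : ∀ t : ℝ, IntegrableOn (fun y => Real.exp (y / α) * f y) (Set.Iic t) := by
    intro t
    refine Integrable.mono' ((helm_exp_int_Iic hα t).mul_const M)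
      (((Real.continuous_exp.comp (continuous_id.div_const α)).mul hfc).aestronglyMeasurable.restrict) ?_
    filter_upwards with y
    rw [Real.norm_eq_abs, abs_mul, abs_of_pos (Real.exp_pos _)]
    exact mul_le_mul_of_nonneg_left (hM y) (Real.exp_pos _).le
  have hexpIoi : ∀ t : ℝ, IntegrableOn (fun y => Real.exp (-y / α)) (Set.Ioi t) := by
    intro t
    have := exp_neg_integrableOn_Ioi t (inv_pos.mpr hα)
    simpa [neg_div, div_eq_mul_inv, mul_comm] using this
  have hkIoi : ∀ t : ℝ, IntegrableOn (fun y => Real.exp (-y / α) * f y) (Set.Ioi t) := by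
    intro t
    refine Integrable.mono' ((hexpIoi t).mul_const M)
      (((Real.continuous_exp.comp (continuous_neg.div_const α)).mul hfc).aestronglyMeasurable.restrict) ?_
    filter_upwards with y
    rw [Real.norm_eq_abs, abs_mul, abs_of_pos (Real.exp_pos _)]
    exact mul_le_mul_of_nonneg_left (hM y) (Real.exp_pos _).le
  -- express `F` in terms of `A` and `B`
  have hFfun : ∀ u : ℝ, F u = (1 / (2 * α)) * (A u + B u) := by
    intro u
    have e₁ : ∀ y ∈ Set.Iic u, (1 / (2 * α)) * Real.exp (-|u - y| / α) * f y
        = ((1 / (2 * α)) * Real.exp (-u / α)) * (Real.exp (y / α) * f y) := by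
      intro y hy
      rw [abs_of_nonneg (sub_nonneg.2 (Set.mem_Iic.1 hy)),
        show -(u - y) / α = -u / α + y / α by ring, Real.exp_add]
      ring
    have e₂ : ∀ y ∈ Set.Ioi u, (1 / (2 * α)) * Real.exp (-|u - y| / α) * f y
        = ((1 / (2 * α)) * Real.exp (u / α)) * (Real.exp (-y / α) * f y) := by
      intro y hy
      rw [abs_of_nonpos (sub_nonpos.2 (le_of_lt (Set.mem_Ioi.1 hy))),
        show -(-(u - y)) / α = u / α + -y / α by ring, Real.exp_add]
      ring
    have int₁ : IntegrableOn (fun y => (1 / (2 * α)) * Real.exp (-|u - y| / α) * f y)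
        (Set.Iic u) := by
      exact IntegrableOn.congr_fun (Integrable.const_mul (hkIic u)
        ((1 / (2 * α)) * Real.exp (-u / α))) (fun y hy => (e₁ y hy).symm) measurableSet_Iic
    have int₂ : IntegrableOn (fun y => (1 / (2 * α)) * Real.exp (-|u - y| / α) * f y)
        (Set.Ioi u) := by
      exact IntegrableOn.congr_fun (Integrable.const_mul (hkIoi u)
        ((1 / (2 * α)) * Real.exp (u / α))) (fun y hy => (e₂ y hy).symm) measurableSet_Ioi
    rw [hF u, ← intervalIntegral.integral_Iic_add_Ioi int₁ int₂,
      setIntegral_congr_fun measurableSet_Iic e₁,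
      setIntegral_congr_fun measurableSet_Ioi e₂,
      integral_const_mul, integral_const_mul, hBval u]
    simp only [hA_def]
    ring
  have hFeq : F = fun u => (1 / (2 * α)) * (A u + B u) := funext hFfun
  -- first derivative of F
  have hF1 : ∀ u, HasDerivAt F ((1 / (2 * α)) * ((-α⁻¹ * A u + f u) + (α⁻¹ * B u - f u))) u := by
    intro u
    rw [hFeq]
    exact ((hA u).add (hB u)).const_mul _
  have hderivF : deriv F = fun u => (1 / (2 * α)) * (α⁻¹ * B u - α⁻¹ * A u) := by
    funext u
    rw [(hF1 u).deriv]
    ring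
  intro x
  -- second derivative
  have hF2 : HasDerivAt (deriv F)
      ((1 / (2 * α)) * (α⁻¹ * (α⁻¹ * B x - f x) - α⁻¹ * (-α⁻¹ * A x + f x))) x := by
    rw [hderivF]
    exact (((hB x).const_mul α⁻¹).sub ((hA x).const_mul α⁻¹)).const_mul _
  rw [hF2.deriv, hFfun x]
  have hα' : α ≠ 0 := ne_of_gt hα
  field_simp
  ring
end

section
/- Under the hypotheses of the Lipschitz estimate |H[ρ₁](x,t) - H[ρ₂](x,t)| ≤ L·e^{2Lt}·‖ρ₁ - ρ₂‖ (with ‖·‖ the weighted norm ess sup e^{-2Lt}|·|), the integral operator T defined by (Tρ)(ξ,τ) = ρ_0(x(0;ξ,τ)) + ∫_0^τ H[ρ](x(t;ξ,τ), t) dt is a strict contraction on X with contraction constant 1/2, i.e., ‖Tρ₁ - Tρ₂‖ ≤ (1/2)‖ρ₁ - ρ₂‖ for all ρ₁, ρ₂ ∈ X. -/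
/-!
Since `T ρ₁ - T ρ₂` is the integral along the characteristic of `H[ρ₁] - H[ρ₂]`, the Lipschitz
estimate bounds it at time `τ` by `∫₀^τ L e^{2Lt} C dt = C (e^{2Lτ} - 1) / 2`; the weight
`e^{-2Lτ}` then turns this into `C (1 - e^{-2Lτ}) / 2 ≤ C / 2`.
-/

open Set Real MeasureTheory intervalIntegral

theorem integral_mul_exp_two_mul (L τ : ℝ) :
    ∫ t in (0:ℝ)..τ, L * exp (2 * L * t) = (exp (2 * L * τ) - 1) / 2 := by
  have hderiv (t : ℝ) : HasDerivAt (fun s => exp (2 * L * s) / 2) (L * exp (2 * L * t)) t :=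
    ((((hasDerivAt_id t).const_mul (2 * L)).exp).div_const 2).congr_deriv
      (by simp only [id, mul_one]; ring)
  rw [integral_eq_sub_of_hasDerivAt (fun t _ => hderiv t)
    (Continuous.intervalIntegrable (by fun_prop) _ _)]
  simp only [mul_zero, exp_zero]
  ring

theorem abs_integral_le_of_abs_le_mul_exp {f : ℝ → ℝ} {L C τ : ℝ} (hτ : 0 ≤ τ)
    (hf : ∀ t ∈ Ioc 0 τ, |f t| ≤ L * exp (2 * L * t) * C) :
    |∫ t in (0:ℝ)..τ, f t| ≤ C * (exp (2 * L * τ) - 1) / 2 := by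
  have hbound : Continuous fun t => L * exp (2 * L * t) * C := by fun_prop
  calc |∫ t in (0:ℝ)..τ, f t|
      ≤ ∫ t in (0:ℝ)..τ, L * exp (2 * L * t) * C :=
        norm_integral_le_of_norm_le (f := f) hτ (Filter.Eventually.of_forall hf)
          (hbound.intervalIntegrable _ _)
    _ = C * (exp (2 * L * τ) - 1) / 2 := by
        simp only [intervalIntegral.integral_mul_const, integral_mul_exp_two_mul]
        ring

theorem exp_neg_mul_abs_integral_le_half {f : ℝ → ℝ} {L C τ : ℝ} (hC : 0 ≤ C) (hτ : 0 ≤ τ)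
    (hf : ∀ t ∈ Ioc 0 τ, |f t| ≤ L * exp (2 * L * t) * C) :
    exp (-2 * L * τ) * |∫ t in (0:ℝ)..τ, f t| ≤ 1 / 2 * C := by
  have hweight : exp (-2 * L * τ) * exp (2 * L * τ) = 1 := by
    rw [← exp_add]; ring_nf; exact exp_zero
  calc exp (-2 * L * τ) * |∫ t in (0:ℝ)..τ, f t|
      ≤ exp (-2 * L * τ) * (C * (exp (2 * L * τ) - 1) / 2) :=
        mul_le_mul_of_nonneg_left (abs_integral_le_of_abs_le_mul_exp hτ hf) (exp_pos _).le
    _ = 1 / 2 * C - 1 / 2 * C * exp (-2 * L * τ) := by linear_combination C / 2 * hweight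
    _ ≤ 1 / 2 * C := sub_le_self _ (by positivity)

theorem observable_T_contraction_general {Ω : Type*} (Tfin L : ℝ)
    (H : (Ω × ℝ → ℝ) → (Ω × ℝ → ℝ))
    (xchar : ℝ → Ω × ℝ → Ω)
    (ρ₀ : Ω → ℝ)
    (hH_lip : ∀ (ρ₁ ρ₂ : Ω × ℝ → ℝ) (C : ℝ), 0 ≤ C →
      (∀ p : Ω × ℝ, p.2 ∈ Icc 0 Tfin → Real.exp (-2 * L * p.2) * |ρ₁ p - ρ₂ p| ≤ C) →
      ∀ p : Ω × ℝ, p.2 ∈ Icc 0 Tfin →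
        |H ρ₁ p - H ρ₂ p| ≤ L * Real.exp (2 * L * p.2) * C)
    (hint : ∀ (ρ : Ω × ℝ → ℝ) (p : Ω × ℝ),
      IntervalIntegrable (fun t => H ρ (xchar t p, t)) volume 0 p.2)
    (T : (Ω × ℝ → ℝ) → (Ω × ℝ → ℝ))
    (hT : ∀ (ρ : Ω × ℝ → ℝ) (p : Ω × ℝ),
      T ρ p = ρ₀ (xchar 0 p) + ∫ t in (0:ℝ)..p.2, H ρ (xchar t p, t)) :
    ∀ (ρ₁ ρ₂ : Ω × ℝ → ℝ) (C : ℝ), 0 ≤ C →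
      (∀ p : Ω × ℝ, p.2 ∈ Icc 0 Tfin → Real.exp (-2 * L * p.2) * |ρ₁ p - ρ₂ p| ≤ C) →
      ∀ p : Ω × ℝ, p.2 ∈ Icc 0 Tfin →
        Real.exp (-2 * L * p.2) * |T ρ₁ p - T ρ₂ p| ≤ (1/2) * C := by
  intro ρ₁ ρ₂ C hC hbound p ⟨hτ0, hτT⟩
  have hdiff : T ρ₁ p - T ρ₂ p =
      ∫ t in (0:ℝ)..p.2, (H ρ₁ (xchar t p, t) - H ρ₂ (xchar t p, t)) := by
    rw [hT, hT, integral_sub (hint ρ₁ p) (hint ρ₂ p)]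
    ring
  rw [hdiff]
  exact exp_neg_mul_abs_integral_le_half hC hτ0 fun t ht =>
    hH_lip ρ₁ ρ₂ C hC hbound (xchar t p, t) ⟨ht.1.le, ht.2.trans hτT⟩

/-- Given the Lipschitz estimate for `H`, the integral operator
`(Tρ)(ξ,τ) = ρ₀(x(0;ξ,τ)) + ∫₀^τ H[ρ](x(t;ξ,τ),t) dt` is a `1/2`-contraction
in the weighted norm `ess sup e^{-2Lt}|·|` (expressed via common bounds `C`). -/
theorem observable_T_contraction {Ω : Type*} (Tfin L : ℝ) (hL : 0 < L)
    (H : (Ω × ℝ → ℝ) → (Ω × ℝ → ℝ))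
    (xchar : ℝ → Ω × ℝ → Ω)
    (ρ₀ : Ω → ℝ)
    (hH_lip : ∀ (ρ₁ ρ₂ : Ω × ℝ → ℝ) (C : ℝ), 0 ≤ C →
      (∀ p : Ω × ℝ, p.2 ∈ Icc 0 Tfin → Real.exp (-2 * L * p.2) * |ρ₁ p - ρ₂ p| ≤ C) →
      ∀ p : Ω × ℝ, p.2 ∈ Icc 0 Tfin →
        |H ρ₁ p - H ρ₂ p| ≤ L * Real.exp (2 * L * p.2) * C)
    (hint : ∀ (ρ : Ω × ℝ → ℝ) (p : Ω × ℝ),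
      IntervalIntegrable (fun t => H ρ (xchar t p, t)) volume 0 p.2)
    (T : (Ω × ℝ → ℝ) → (Ω × ℝ → ℝ))
    (hT : ∀ (ρ : Ω × ℝ → ℝ) (p : Ω × ℝ),
      T ρ p = ρ₀ (xchar 0 p) + ∫ t in (0:ℝ)..p.2, H ρ (xchar t p, t)) :
    ∀ (ρ₁ ρ₂ : Ω × ℝ → ℝ) (C : ℝ), 0 ≤ C →
      (∀ p : Ω × ℝ, p.2 ∈ Icc 0 Tfin → Real.exp (-2 * L * p.2) * |ρ₁ p - ρ₂ p| ≤ C) →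
      ∀ p : Ω × ℝ, p.2 ∈ Icc 0 Tfin →
        Real.exp (-2 * L * p.2) * |T ρ₁ p - T ρ₂ p| ≤ (1/2) * C :=
  observable_T_contraction_general Tfin L H xchar ρ₀ hH_lip hint T hT
end
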